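/- arXiv:1009.0833 — 4 statements merged into one kernel-verified Lean document; each statement's English description precedes it below -/
import Mathlib

section
/- Let Δ be a simplicial complex on [n], let G be a face of Δ, and let Y = {x_i : i ∉ V(star_Δ G)}, where V(star_Δ G) denotes the vertex set of star_Δ G. Then in the localization S[x_i^{-1} : i ∈ G] one has I_Δ · S[x_i^{-1} : i ∈ G] = (I_{link_Δ G}, Y) · S[x_i^{-1} : i ∈ G]. -/
open CategoryTheory Opposite

/-! ### Abstract simplicial complexes -/

/-- An abstract simplicial complex on the vertex set `Fin n`: a collection of finite
subsets (faces) closed under taking subsets. -/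
structure SimComplex (n : ℕ) where
  faces : Set (Finset (Fin n))
  down_closed : ∀ ⦃F G : Finset (Fin n)⦄, F ∈ faces → G ⊆ F → G ∈ faces

namespace SimComplex

variable {n : ℕ}

/-- The vertex set of a simplicial complex. -/
def vertexSet (Δ : SimComplex n) : Set (Fin n) := {v | ({v} : Finset (Fin n)) ∈ Δ.faces}

/-- The dimension of a simplicial complex: the maximal cardinality of a face, minus one. -/
noncomputable def dim (Δ : SimComplex n) : ℤ :=
  (Int.ofNat (sSup (Finset.card '' Δ.faces))) - 1

/-- A facet is a maximal face. -/
def IsFacet (Δ : SimComplex n) (F : Finset (Fin n)) : Prop :=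
  F ∈ Δ.faces ∧ ∀ G ∈ Δ.faces, F ⊆ G → F = G

/-- A complex is pure if all facets have the same cardinality. -/
def Pure (Δ : SimComplex n) : Prop :=
  ∀ F G, Δ.IsFacet F → Δ.IsFacet G → F.card = G.card

/-- A matroid: for any two faces `F`, `G` with `|F| > |G|` there is `i ∈ F ∖ G`
with `G ∪ {i}` a face. -/
def IsMatroid (Δ : SimComplex n) : Prop :=
  ∀ F G, F ∈ Δ.faces → G ∈ Δ.faces → G.card < F.card →
    ∃ i ∈ F, i ∉ G ∧ insert i G ∈ Δ.faces

/-- The link of a face `G`: `{F ∖ G : G ⊆ F ∈ Δ}`. -/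
def link (Δ : SimComplex n) (G : Finset (Fin n)) : SimComplex n where
  faces := {F | Disjoint F G ∧ F ∪ G ∈ Δ.faces}
  down_closed := by
    intro F F' hF hsub
    exact ⟨hF.1.mono_left hsub, Δ.down_closed hF.2 (Finset.union_subset_union hsub subset_rfl)⟩

/-- The star of a face `G`: `{F ∈ Δ : F ∪ G ∈ Δ}`. -/
def star (Δ : SimComplex n) (G : Finset (Fin n)) : SimComplex n where
  faces := {F | F ∈ Δ.faces ∧ F ∪ G ∈ Δ.faces}
  down_closed := by
    intro F F' hF hsub
    exact ⟨Δ.down_closed hF.1 hsub, Δ.down_closed hF.2 (Finset.union_subset_union hsub subset_rfl)⟩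

/-- `Δ` is locally a matroid if the link of every vertex is a matroid. -/
def LocallyMatroid (Δ : SimComplex n) : Prop :=
  ∀ v ∈ Δ.vertexSet, (Δ.link {v}).IsMatroid

/-- Two vertices are adjacent if they span a 1-dimensional face (an edge). -/
def Adj (Δ : SimComplex n) (u v : Fin n) : Prop :=
  u ≠ v ∧ ({u, v} : Finset (Fin n)) ∈ Δ.faces

/-- Two vertices are joined by a path of edges. -/
def Reach (Δ : SimComplex n) : Fin n → Fin n → Prop := Relation.ReflTransGen Δ.Adj

/-- A complex is connected if any two vertices are joined by a path of edges. -/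
def Connected (Δ : SimComplex n) : Prop :=
  ∀ u ∈ Δ.vertexSet, ∀ v ∈ Δ.vertexSet, Δ.Reach u v

/-- The induced subcomplex on a set `W` of vertices. -/
def induced (Δ : SimComplex n) (W : Set (Fin n)) : SimComplex n where
  faces := {F | F ∈ Δ.faces ∧ ↑F ⊆ W}
  down_closed := by
    intro F F' hF hsub
    exact ⟨Δ.down_closed hF.1 hsub, subset_trans (Finset.coe_subset.2 hsub) hF.2⟩

/-- The connected component of a vertex `v`, as an induced subcomplex. -/
def component (Δ : SimComplex n) (v : Fin n) : SimComplex n :=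
  Δ.induced {u | Δ.Reach v u}

/-- A minimal nonface: a subset of the vertex set which is not a face, all of whose
proper subsets are faces. -/
def IsMinNonface (Δ : SimComplex n) (F : Finset (Fin n)) : Prop :=
  ↑F ⊆ Δ.vertexSet ∧ F ∉ Δ.faces ∧ ∀ G ⊂ F, G ∈ Δ.faces

/-- A complete intersection complex: the minimal nonfaces are pairwise disjoint. -/
def IsCompleteIntersection (Δ : SimComplex n) : Prop :=
  ∀ F G, Δ.IsMinNonface F → Δ.IsMinNonface G → F ≠ G → Disjoint F G

/-- `Δ` is locally a complete intersection if the link of every vertex is one. -/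
def LocallyCompleteIntersection (Δ : SimComplex n) : Prop :=
  ∀ v ∈ Δ.vertexSet, (Δ.link {v}).IsCompleteIntersection

/-- A path graph: vertices `f 0, …, f (k+1)` and edges exactly the consecutive pairs. -/
def IsPathGraph (Δ : SimComplex n) : Prop :=
  ∃ (k : ℕ) (f : Fin (k + 2) → Fin n), Function.Injective f ∧
    Δ.vertexSet = Set.range f ∧
    ∀ e : Finset (Fin n), (e ∈ Δ.faces ∧ e.card = 2) ↔
      ∃ i : Fin (k + 1), e = {f i.castSucc, f i.succ}

/-- A cycle graph: vertices `f 0, …, f (k+2)` and edges exactly the cyclically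
consecutive pairs. -/
def IsCycleGraph (Δ : SimComplex n) : Prop :=
  ∃ (k : ℕ) (f : Fin (k + 3) → Fin n), Function.Injective f ∧
    Δ.vertexSet = Set.range f ∧
    ∀ e : Finset (Fin n), (e ∈ Δ.faces ∧ e.card = 2) ↔
      ∃ i : Fin (k + 3), e = {f i, f (i + 1)}

end SimComplex

/-! ### Commutative-algebra notions -/

noncomputable section

/-- The `i`-th Ext group of two modules over a commutative ring. -/
def ExtGroup (A : Type) [CommRing A] (i : ℕ) (M N : Type) [AddCommGroup M] [Module A M]
    [AddCommGroup N] [Module A N] : Type :=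
  ((Ext A (ModuleCat A) i).obj (op (ModuleCat.of A M))).obj (ModuleCat.of A N)

/-- A local ring is Cohen–Macaulay if its depth equals its Krull dimension, i.e. if
`Ext^i(residue field, B)` vanishes for all `i < dim B`. -/
def IsCohenMacaulayLocalRing (B : Type) [CommRing B] [IsLocalRing B] : Prop :=
  ∀ i : ℕ, (i : WithBot ℕ∞) < ringKrullDim B →
    Subsingleton (ExtGroup B i (B ⧸ IsLocalRing.maximalIdeal B) B)

/-- A commutative ring is Cohen–Macaulay if all its localizations at primes are
Cohen–Macaulay local rings. -/
def IsCohenMacaulayRing (A : Type) [CommRing A] : Prop :=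
  ∀ (P : Ideal A) (hP : P.IsPrime),
    letI : P.IsPrime := hP
    IsCohenMacaulayLocalRing (Localization.AtPrime P)

/-- An ideal `I` of `A` is Cohen–Macaulay if `A ⧸ I` is a Cohen–Macaulay ring. -/
def IsCohenMacaulayIdeal {A : Type} [CommRing A] (I : Ideal A) : Prop :=
  IsCohenMacaulayRing (A ⧸ I)

/-- The ideal `I` satisfies Serre's condition `(S₂)`: for every prime `P` of `A`, the
depth of the localized module `(A⧸I)_P` over `A_P` is at least `min {2, height P}`,
where the height of `P` is the Krull dimension of `A_P` and depth is detected by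
vanishing of `Ext^i` from the residue field. -/
def SatisfiesS2 {A : Type} [CommRing A] (I : Ideal A) : Prop :=
  ∀ (P : Ideal A) (hP : P.IsPrime),
    letI : P.IsPrime := hP
    ∀ i : ℕ, (i : WithBot ℕ∞) < min 2 (ringKrullDim (Localization.AtPrime P)) →
      Subsingleton (ExtGroup (Localization.AtPrime P) i
        (Localization.AtPrime P ⧸ IsLocalRing.maximalIdeal (Localization.AtPrime P))
        (LocalizedModule P.primeCompl (A ⧸ I)))

/-- The `m`-th symbolic power of an ideal: the intersection of the `m`-th powers of
its minimal primes. -/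
def symbPowIdeal {A : Type} [CommRing A] (I : Ideal A) (m : ℕ) : Ideal A :=
  ⨅ P ∈ I.minimalPrimes, P ^ m

end

/-! ### Stanley–Reisner theory -/

noncomputable section

open MvPolynomial

/-- The squarefree monomial attached to a finite set of variables. -/
def faceMonomial (K : Type) [Field K] {n : ℕ} (F : Finset (Fin n)) : MvPolynomial (Fin n) K :=
  ∏ i ∈ F, X i

/-- The Stanley–Reisner ideal of a complex on `[n]`: generated by the squarefree
monomials corresponding to nonfaces. -/
def SRIdeal (K : Type) [Field K] {n : ℕ} (Δ : SimComplex n) : Ideal (MvPolynomial (Fin n) K) :=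
  Ideal.span {p | ∃ F : Finset (Fin n), F ∉ Δ.faces ∧ p = faceMonomial K F}

/-- The Stanley–Reisner ideal of a complex whose vertex set may be a proper subset of
`[n]`: generated by the squarefree monomials of nonfaces contained in the vertex set. -/
def SRIdealOn (K : Type) [Field K] {n : ℕ} (Δ : SimComplex n) : Ideal (MvPolynomial (Fin n) K) :=
  Ideal.span {p | ∃ F : Finset (Fin n), ↑F ⊆ Δ.vertexSet ∧ F ∉ Δ.faces ∧ p = faceMonomial K F}

/-- The prime ideal generated by the variables indexed by `F`. -/
def PF (K : Type) [Field K] {n : ℕ} (F : Finset (Fin n)) : Ideal (MvPolynomial (Fin n) K) :=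
  Ideal.span ((fun i => (X i : MvPolynomial (Fin n) K)) '' ↑F)

/-- The `m`-th symbolic power of the Stanley–Reisner ideal:
`I_Δ^{(m)} = ⋂_{F facet} P_{complement of F}^m`. -/
def SRSymbPow (K : Type) [Field K] {n : ℕ} (Δ : SimComplex n) (m : ℕ) :
    Ideal (MvPolynomial (Fin n) K) :=
  ⨅ (F : Finset (Fin n)) (_ : Δ.IsFacet F), (PF K Fᶜ) ^ m

/-- The cover ideal `J(Δ) = ⋂_{F facet} P_F` and its symbolic powers. -/
def coverSymbPow (K : Type) [Field K] {n : ℕ} (Δ : SimComplex n) (m : ℕ) :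
    Ideal (MvPolynomial (Fin n) K) :=
  ⨅ (F : Finset (Fin n)) (_ : Δ.IsFacet F), (PF K F) ^ m

/-- The graded maximal ideal `(x_1, …, x_n)`. -/
def maxIdeal (K : Type) [Field K] (n : ℕ) : Ideal (MvPolynomial (Fin n) K) :=
  Ideal.span (Set.range X)

/-- The `i`-th local cohomology module of `S ⧸ I` with support in the maximal
graded ideal. -/
def locCoh (K : Type) [Field K] {n : ℕ} (i : ℕ) (I : Ideal (MvPolynomial (Fin n) K)) :
    ModuleCat (MvPolynomial (Fin n) K) :=
  (localCohomology (maxIdeal K n) i).obj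
    (ModuleCat.of (MvPolynomial (Fin n) K) (MvPolynomial (Fin n) K ⧸ I))

/-- `I` is quasi-Buchsbaum: the maximal ideal annihilates all local cohomology modules
`H^i_m(S⧸I)` for `i < dim S⧸I`. -/
def IsQuasiBuchsbaum (K : Type) [Field K] {n : ℕ} (I : Ideal (MvPolynomial (Fin n) K)) : Prop :=
  ∀ i : ℕ, (i : WithBot ℕ∞) < ringKrullDim (MvPolynomial (Fin n) K ⧸ I) →
    ∀ x ∈ maxIdeal K n, ∀ y : (locCoh K i I), x • y = 0

/-- `I` is Buchsbaum: for `i < dim S⧸I` the natural map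
`Ext^i_S(S⧸m, S⧸I) → H^i_m(S⧸I)` (the structure map into the direct limit defining local
cohomology) is surjective. -/
def IsBuchsbaum (K : Type) [Field K] {n : ℕ} (I : Ideal (MvPolynomial (Fin n) K)) : Prop :=
  ∀ i : ℕ, (i : WithBot ℕ∞) < ringKrullDim (MvPolynomial (Fin n) K ⧸ I) →
    letI := localCohomology.hasColimitDiagram
      (localCohomology.idealPowersDiagram (maxIdeal K n)) i
    Function.Surjective
      ((CategoryTheory.Limits.colimit.ι
          (localCohomology.diagram (localCohomology.idealPowersDiagram (maxIdeal K n)) i)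
          (Opposite.op (Opposite.op (1 : ℕ)))).app
        (ModuleCat.of (MvPolynomial (Fin n) K) (MvPolynomial (Fin n) K ⧸ I)))

/-- `I` is generalized Cohen–Macaulay: the local cohomology modules `H^i_m(S⧸I)` are
finite-dimensional over `K` for `i < dim S⧸I`. -/
def IsGeneralizedCM (K : Type) [Field K] {n : ℕ} (I : Ideal (MvPolynomial (Fin n) K)) : Prop :=
  ∀ i : ℕ, (i : WithBot ℕ∞) < ringKrullDim (MvPolynomial (Fin n) K ⧸ I) →
    Module.Finite K (RestrictScalars K (MvPolynomial (Fin n) K) (locCoh K i I))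

end

/-! ### Monomial ideals -/

/-- A monomial ideal of `K[x_1,…,x_n]`. -/
def IsMonomialIdeal {K : Type} [Field K] {n : ℕ} (I : Ideal (MvPolynomial (Fin n) K)) : Prop :=
  ∃ S : Set (Fin n →₀ ℕ),
    I = Ideal.span {p | ∃ d ∈ S, p = MvPolynomial.monomial d (1 : K)}

/-- A squarefree monomial ideal of `K[x_1,…,x_n]`. -/
def IsSquarefreeMonomialIdeal {K : Type} [Field K] {n : ℕ}
    (I : Ideal (MvPolynomial (Fin n) K)) : Prop :=
  ∃ S : Set (Finset (Fin n)),
    I = Ideal.span {p | ∃ F ∈ S, p = ∏ i ∈ F, (MvPolynomial.X i : MvPolynomial (Fin n) K)}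

namespace SimComplex

variable {n : ℕ} (Δ : SimComplex n) (G : Finset (Fin n))

theorem mem_vertexSet_star_iff {i : Fin n} :
    i ∈ (Δ.star G).vertexSet ↔ insert i G ∈ Δ.faces := by
  refine ⟨fun h => h.2, fun h => ⟨Δ.down_closed h ?_, h⟩⟩
  simp

theorem mem_vertexSet_link_iff {i : Fin n} :
    i ∈ (Δ.link G).vertexSet ↔ i ∉ G ∧ insert i G ∈ Δ.faces := by
  simp [vertexSet, link]

theorem disjoint_of_subset_vertexSet_link {F : Finset (Fin n)}
    (hF : ↑F ⊆ (Δ.link G).vertexSet) : Disjoint F G :=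
  Finset.disjoint_left.2 fun _ hi => ((Δ.mem_vertexSet_link_iff G).1 (hF hi)).1

theorem union_notMem_of_notMem_link {F : Finset (Fin n)}
    (hV : ↑F ⊆ (Δ.link G).vertexSet) (hF : F ∉ (Δ.link G).faces) : F ∪ G ∉ Δ.faces :=
  fun h => hF ⟨Δ.disjoint_of_subset_vertexSet_link G hV, h⟩

theorem sdiff_mem_link_iff {F : Finset (Fin n)} :
    F \ G ∈ (Δ.link G).faces ↔ F ∪ G ∈ Δ.faces := by
  simp [link, Finset.sdiff_disjoint]

end SimComplex

open MvPolynomial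

section faceMonomial

variable (K : Type) [Field K] {n : ℕ}

theorem faceMonomial_singleton (i : Fin n) : faceMonomial K {i} = X i :=
  Finset.prod_singleton _ _

theorem faceMonomial_dvd_faceMonomial {F F' : Finset (Fin n)} (h : F' ⊆ F) :
    faceMonomial K F' ∣ faceMonomial K F :=
  Finset.prod_dvd_prod_of_subset _ _ _ h

theorem faceMonomial_mul_faceMonomial (F G : Finset (Fin n)) :
    faceMonomial K F * faceMonomial K G = faceMonomial K (F ∪ G) * faceMonomial K (F ∩ G) :=
  Finset.prod_union_inter.symm

theorem faceMonomial_mem_closure_X (G : Finset (Fin n)) :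
    faceMonomial K G ∈ Submonoid.closure ((fun i => (X i : MvPolynomial (Fin n) K)) '' ↑G) :=
  Submonoid.prod_mem _ fun i hi => Submonoid.subset_closure ⟨i, hi, rfl⟩

end faceMonomial

section StanleyReisner

variable (K : Type) [Field K] {n : ℕ} (Δ : SimComplex n) (G : Finset (Fin n))

theorem faceMonomial_mem_SRIdeal {F : Finset (Fin n)} (hF : F ∉ Δ.faces) :
    faceMonomial K F ∈ SRIdeal K Δ :=
  Ideal.subset_span ⟨F, hF, rfl⟩

/-- A nonface either contains a vertex outside `star_Δ G`, or its part outside `G` is a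
nonface of `link_Δ G`; in both cases its monomial is a multiple of a generator. -/
theorem SRIdeal_le_SRIdealOn_link_sup :
    SRIdeal K Δ ≤ SRIdealOn K (Δ.link G) ⊔
      Ideal.span {p | ∃ i : Fin n, i ∉ (Δ.star G).vertexSet ∧ p = X i} := by
  refine Ideal.span_le.2 ?_
  rintro _ ⟨F, hF, rfl⟩
  by_cases hstar : ∃ i ∈ F, i ∉ (Δ.star G).vertexSet
  · obtain ⟨i, hiF, hi⟩ := hstar
    have hXi : X i ∣ faceMonomial K F := by
      simpa only [faceMonomial_singleton] using
        faceMonomial_dvd_faceMonomial K (Finset.singleton_subset_iff.2 hiF)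
    exact Ideal.mem_sup_right (Ideal.mem_of_dvd _ hXi (Ideal.subset_span ⟨i, hi, rfl⟩))
  · push Not at hstar
    have hV : ↑(F \ G) ⊆ (Δ.link G).vertexSet := fun i hi => by
      rw [Finset.mem_coe, Finset.mem_sdiff] at hi
      exact (Δ.mem_vertexSet_link_iff G).2
        ⟨hi.2, (Δ.mem_vertexSet_star_iff G).1 (hstar i hi.1)⟩
    have hlink : F \ G ∉ (Δ.link G).faces := fun h =>
      hF (Δ.down_closed ((Δ.sdiff_mem_link_iff G).1 h) Finset.subset_union_left)
    exact Ideal.mem_sup_left (Ideal.mem_of_dvd _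
      (faceMonomial_dvd_faceMonomial K Finset.sdiff_subset)
      (Ideal.subset_span ⟨F \ G, hV, hlink, rfl⟩))

variable {R : Type*} [CommRing R] (f : MvPolynomial (Fin n) K →+* R)

/-- `x^F x^G = x^(F ∪ G) x^(F ∩ G)` lies in `I_Δ`, and `x^G` is a unit. -/
theorem faceMonomial_mem_map_SRIdeal (hG : IsUnit (f (faceMonomial K G)))
    {F : Finset (Fin n)} (hF : F ∪ G ∉ Δ.faces) :
    f (faceMonomial K F) ∈ (SRIdeal K Δ).map f := by
  rw [← Ideal.mul_unit_mem_iff_mem _ hG, ← map_mul, faceMonomial_mul_faceMonomial]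
  exact Ideal.mem_map_of_mem f
    (Ideal.mul_mem_right _ _ (faceMonomial_mem_SRIdeal K Δ hF))

theorem map_SRIdealOn_link_le (hG : IsUnit (f (faceMonomial K G))) :
    (SRIdealOn K (Δ.link G)).map f ≤ (SRIdeal K Δ).map f := by
  refine Ideal.map_le_iff_le_comap.2 (Ideal.span_le.2 ?_)
  rintro _ ⟨F, hV, hF, rfl⟩
  exact faceMonomial_mem_map_SRIdeal K Δ G f hG (Δ.union_notMem_of_notMem_link G hV hF)

theorem map_span_X_notMem_star_le (hG : IsUnit (f (faceMonomial K G))) :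
    (Ideal.span {p | ∃ i : Fin n, i ∉ (Δ.star G).vertexSet ∧ p = X i}).map f ≤
      (SRIdeal K Δ).map f := by
  refine Ideal.map_le_iff_le_comap.2 (Ideal.span_le.2 ?_)
  rintro _ ⟨i, hi, rfl⟩
  rw [Δ.mem_vertexSet_star_iff G] at hi
  have hXi := faceMonomial_mem_map_SRIdeal K Δ G f hG (F := {i}) hi
  rwa [faceMonomial_singleton] at hXi

end StanleyReisner

theorem SRIdeal_localization_at_face_general (K : Type) [Field K] {n : ℕ} (Δ : SimComplex n)
    (G : Finset (Fin n)) :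
    Ideal.map
        (algebraMap (MvPolynomial (Fin n) K)
          (Localization (Submonoid.closure
            ((fun i => (MvPolynomial.X i : MvPolynomial (Fin n) K)) '' (G : Set (Fin n))))))
        (SRIdeal K Δ) =
      Ideal.map
        (algebraMap (MvPolynomial (Fin n) K)
          (Localization (Submonoid.closure
            ((fun i => (MvPolynomial.X i : MvPolynomial (Fin n) K)) '' (G : Set (Fin n))))))
        (SRIdealOn K (Δ.link G) ⊔
          Ideal.span {p : MvPolynomial (Fin n) K |
            ∃ i : Fin n, i ∉ (Δ.star G).vertexSet ∧ p = MvPolynomial.X i}) := by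
  have hG := IsLocalization.map_units
    (Localization (Submonoid.closure ((fun i => (X i : MvPolynomial (Fin n) K)) '' ↑G)))
    ⟨_, faceMonomial_mem_closure_X K G⟩
  refine le_antisymm (Ideal.map_mono (SRIdeal_le_SRIdealOn_link_sup K Δ G)) ?_
  rw [Ideal.map_sup]
  exact sup_le (map_SRIdealOn_link_le K Δ G _ hG) (map_span_X_notMem_star_le K Δ G _ hG)

/-- **Lemma (localization of a Stanley–Reisner ideal at a face).** For a face `G` of `Δ` and
`Y = {x_i : i ∉ V(star_Δ G)}`, in `S[x_i^{-1} : i ∈ G]` one has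
`I_Δ S[x_i^{-1} : i ∈ G] = (I_{link_Δ G}, Y) S[x_i^{-1} : i ∈ G]`. -/
theorem SRIdeal_localization_at_face (K : Type) [Field K] {n : ℕ} (Δ : SimComplex n)
    (hV : ∀ i : Fin n, ({i} : Finset (Fin n)) ∈ Δ.faces)
    (G : Finset (Fin n)) (hG : G ∈ Δ.faces) :
    Ideal.map
        (algebraMap (MvPolynomial (Fin n) K)
          (Localization (Submonoid.closure
            ((fun i => (MvPolynomial.X i : MvPolynomial (Fin n) K)) '' (G : Set (Fin n))))))
        (SRIdeal K Δ) =
      Ideal.map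
        (algebraMap (MvPolynomial (Fin n) K)
          (Localization (Submonoid.closure
            ((fun i => (MvPolynomial.X i : MvPolynomial (Fin n) K)) '' (G : Set (Fin n))))))
        (SRIdealOn K (Δ.link G) ⊔
          Ideal.span {p : MvPolynomial (Fin n) K |
            ∃ i : Fin n, i ∉ (Δ.star G).vertexSet ∧ p = MvPolynomial.X i}) :=
  SRIdeal_localization_at_face_general K Δ G
end

section
/- A graph Γ without isolated vertices is a matroid (regarded as a 1-dimensional simplicial complex) if and only if every pair of disjoint edges of Γ is contained in a 4-cycle of Γ. -/
open CategoryTheory Opposite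

/-!
In a matroid, exchanging a vertex `u` against an edge `e` makes `u` adjacent to an endpoint of
`e`. For two disjoint edges this leaves no vertex of the bipartite graph between them
isolated, which forces a perfect matching and hence a 4-cycle. Conversely, in a graph the only
nontrivial exchange is of a vertex `v ∉ e` against an edge `e`: `v` lies on some edge `vw`, and
either `w ∈ e` or the 4-cycle through `e` and `vw` joins `v` to `e`.
-/

namespace SimComplex

variable {n : ℕ} {Δ : SimComplex n}

def HasFourCycleThrough (Δ : SimComplex n) (e f : Finset (Fin n)) : Prop :=
  ∃ a b c d : Fin n, ({a, b, c, d} : Finset (Fin n)).card = 4 ∧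
    e = {a, b} ∧ f = {c, d} ∧
    ({a, b} : Finset (Fin n)) ∈ Δ.faces ∧ ({b, c} : Finset (Fin n)) ∈ Δ.faces ∧
    ({c, d} : Finset (Fin n)) ∈ Δ.faces ∧ ({d, a} : Finset (Fin n)) ∈ Δ.faces

theorem Adj.symm {u v : Fin n} (h : Δ.Adj u v) : Δ.Adj v u :=
  ⟨h.1.symm, Finset.pair_comm u v ▸ h.2⟩

theorem hasFourCycleThrough_of_adj {a b c d : Fin n} (hab : Δ.Adj a b) (hbc : Δ.Adj b c)
    (hcd : Δ.Adj c d) (hda : Δ.Adj d a) (hac : a ≠ c) (hbd : b ≠ d) :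
    Δ.HasFourCycleThrough {a, b} {c, d} :=
  ⟨a, b, c, d,
    Finset.card_eq_four.mpr ⟨a, b, c, d, hab.1, hac, hda.1.symm, hbc.1, hbd, hcd.1, rfl⟩,
    rfl, rfl, hab.2, hbc.2, hcd.2, hda.2⟩

theorem HasFourCycleThrough.exists_adj {e f : Finset (Fin n)} (h : Δ.HasFourCycleThrough e f)
    {v : Fin n} (hv : v ∈ f) : ∃ u ∈ e, Δ.Adj u v := by
  obtain ⟨a, b, c, d, hcard, rfl, rfl, -, hbc, -, hda⟩ := h
  obtain rfl | rfl : v = c ∨ v = d := by simpa using hv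
  · have hbv : b ≠ v := by rintro rfl; grind [Finset.card_le_three]
    exact ⟨b, by simp, hbv, hbc⟩
  · have hav : a ≠ v := by rintro rfl; grind [Finset.card_le_three]
    exact ⟨a, by simp, hav, Finset.pair_comm v a ▸ hda⟩

theorem IsMatroid.exists_adj (hM : Δ.IsMatroid) {e : Finset (Fin n)} (he : e ∈ Δ.faces)
    (he1 : 1 < e.card) {u : Fin n} (hu : {u} ∈ Δ.faces) : ∃ x ∈ e, Δ.Adj x u := by
  obtain ⟨x, hx, hxu, hxu'⟩ := hM e {u} he hu (by simpa using he1)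
  exact ⟨x, hx, Finset.notMem_singleton.mp hxu, hxu'⟩

theorem IsMatroid.hasFourCycleThrough (hM : Δ.IsMatroid) {e f : Finset (Fin n)}
    (he : e ∈ Δ.faces) (hf : f ∈ Δ.faces) (hce : e.card = 2) (hcf : f.card = 2)
    (hef : Disjoint e f) : Δ.HasFourCycleThrough e f := by
  obtain ⟨a, b, hab, rfl⟩ := Finset.card_eq_two.mp hce
  obtain ⟨c, d, hcd, rfl⟩ := Finset.card_eq_two.mp hcf
  obtain ⟨⟨hca, hcb⟩, hda, hdb⟩ : (c ≠ a ∧ c ≠ b) ∧ d ≠ a ∧ d ≠ b := by simpa using hef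
  have neighbour (x y u : Fin n) (hxy : ({x, y} : Finset (Fin n)) ∈ Δ.faces) (hne : x ≠ y)
      (hu : {u} ∈ Δ.faces) : Δ.Adj x u ∨ Δ.Adj y u := by
    simpa using hM.exists_adj hxy (by simp [Finset.card_pair hne]) hu
  have hc := neighbour a b c he hab (Δ.down_closed hf (by simp))
  have hd := neighbour a b d he hab (Δ.down_closed hf (by simp))
  have ha := neighbour c d a hf hcd (Δ.down_closed he (by simp))
  have hb := neighbour c d b hf hcd (Δ.down_closed he (by simp))
  have hmatch : (Δ.Adj b c ∧ Δ.Adj d a) ∨ (Δ.Adj a c ∧ Δ.Adj d b) := by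
    have hsymm := @Adj.symm n Δ
    tauto
  rcases hmatch with ⟨hbc', hda'⟩ | ⟨hac', hdb'⟩
  · exact hasFourCycleThrough_of_adj ⟨hab, he⟩ hbc' ⟨hcd, hf⟩ hda' hca.symm hdb.symm
  · rw [Finset.pair_comm a b]
    exact hasFourCycleThrough_of_adj (Adj.symm ⟨hab, he⟩) hac' ⟨hcd, hf⟩ hdb' hcb.symm hda.symm

theorem exists_adj_of_forall_hasFourCycleThrough
    (hiso : ∀ v : Fin n, ({v} : Finset (Fin n)) ∈ Δ.faces →
      ∃ w : Fin n, w ≠ v ∧ ({v, w} : Finset (Fin n)) ∈ Δ.faces)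
    (h4c : ∀ e f : Finset (Fin n), e ∈ Δ.faces → f ∈ Δ.faces → e.card = 2 → f.card = 2 →
      Disjoint e f → Δ.HasFourCycleThrough e f)
    {e : Finset (Fin n)} (he : e ∈ Δ.faces) (hce : e.card = 2) {v : Fin n}
    (hv : {v} ∈ Δ.faces) : ∃ u ∈ e, Δ.Adj u v := by
  obtain ⟨a, b, hab, rfl⟩ := Finset.card_eq_two.mp hce
  by_cases hvab : v ∈ ({a, b} : Finset (Fin n))
  · obtain rfl | rfl : v = a ∨ v = b := by simpa using hvab
    · exact ⟨b, by simp, Adj.symm ⟨hab, he⟩⟩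
    · exact ⟨a, by simp, hab, he⟩
  obtain ⟨w, hwv, hvw⟩ := hiso v hv
  have hvw' : Δ.Adj v w := ⟨hwv.symm, hvw⟩
  by_cases hwab : w ∈ ({a, b} : Finset (Fin n))
  · exact ⟨w, hwab, hvw'.symm⟩
  have hdisj : Disjoint ({a, b} : Finset (Fin n)) {v, w} :=
    Finset.disjoint_insert_right.mpr ⟨hvab, Finset.disjoint_singleton_right.mpr hwab⟩
  exact (h4c _ _ he hvw hce (Finset.card_pair hwv.symm) hdisj).exists_adj (by simp)

theorem isMatroid_of_forall_hasFourCycleThrough (hgraph : ∀ F ∈ Δ.faces, F.card ≤ 2)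
    (hiso : ∀ v : Fin n, ({v} : Finset (Fin n)) ∈ Δ.faces →
      ∃ w : Fin n, w ≠ v ∧ ({v, w} : Finset (Fin n)) ∈ Δ.faces)
    (h4c : ∀ e f : Finset (Fin n), e ∈ Δ.faces → f ∈ Δ.faces → e.card = 2 → f.card = 2 →
      Disjoint e f → Δ.HasFourCycleThrough e f) :
    Δ.IsMatroid := by
  intro F G hF hG hlt
  have hF2 := hgraph F hF
  obtain hG0 | hG1 : G.card = 0 ∨ G.card = 1 := by omega
  · obtain rfl := Finset.card_eq_zero.mp hG0
    obtain ⟨i, hi⟩ := Finset.card_pos.mp hlt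
    exact ⟨i, hi, Finset.notMem_empty i, Δ.down_closed hF (by simpa using hi)⟩
  · obtain ⟨v, rfl⟩ := Finset.card_eq_one.mp hG1
    obtain ⟨u, hu, huv, huv'⟩ :=
      exists_adj_of_forall_hasFourCycleThrough hiso h4c hF (by omega) hG
    exact ⟨u, hu, Finset.notMem_singleton.mpr huv, huv'⟩

end SimComplex

/-- **Corollary (matroid graphs).** A graph without isolated vertices is a matroid if and
only if every pair of disjoint edges is contained in a 4-cycle. -/
theorem graph_matroid_iff_disjoint_edges_in_four_cycle {n : ℕ} (Δ : SimComplex n)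
    (hgraph : ∀ F ∈ Δ.faces, F.card ≤ 2)
    (hiso : ∀ v : Fin n, ({v} : Finset (Fin n)) ∈ Δ.faces →
      ∃ w : Fin n, w ≠ v ∧ ({v, w} : Finset (Fin n)) ∈ Δ.faces) :
    Δ.IsMatroid ↔
      ∀ e f : Finset (Fin n), e ∈ Δ.faces → f ∈ Δ.faces → e.card = 2 → f.card = 2 →
        Disjoint e f →
        ∃ a b c d : Fin n, ({a, b, c, d} : Finset (Fin n)).card = 4 ∧
          e = {a, b} ∧ f = {c, d} ∧
          ({a, b} : Finset (Fin n)) ∈ Δ.faces ∧ ({b, c} : Finset (Fin n)) ∈ Δ.faces ∧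
          ({c, d} : Finset (Fin n)) ∈ Δ.faces ∧ ({d, a} : Finset (Fin n)) ∈ Δ.faces :=
  ⟨fun hM _ _ he hf hce hcf hef => hM.hasFourCycleThrough he hf hce hcf hef,
    SimComplex.isMatroid_of_forall_hasFourCycleThrough hgraph hiso⟩
end

section
/- Let Δ be a simplicial complex with dim Δ ≥ 2. Then Δ is a matroid if and only if Δ is connected and locally a matroid. -/
open CategoryTheory Opposite

/-!
A matroid is connected because in a matroid with a face of size two any two vertices have a
common neighbour, and links of matroids are matroids.

Conversely, let `Δ` be locally a matroid. Two faces sharing a vertex `v` satisfy augmentation,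
since their traces in the link of `v` do. For faces `F` and `G ∋ v` it therefore suffices to
replace `F` by a face of the same size inside `insert v F` containing `v`; when `|F| ≥ 2` we get
one by augmenting an edge from `v` to `F`, so we need a vertex of `F` adjacent to `v`. The key
point: if `a` is not adjacent to `c` but `a` and `c` have a common neighbour, then `a` is
adjacent to every neighbour of `c`. Indeed, an exchange in the link of a neighbour of `a` moves
adjacency with `a` along the edges of the link of `c`, and that link is connected, being a
matroid with a face of size two (this is where `dim Δ ≥ 2` and connectivity enter). Induction
along a path then shows that any two vertices have a common neighbour.
-/

namespace SimComplex

variable {n : ℕ} {Δ : SimComplex n}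

theorem mem_link_singleton_iff {v : Fin n} {F : Finset (Fin n)} :
    F ∈ (Δ.link {v}).faces ↔ v ∉ F ∧ insert v F ∈ Δ.faces := by
  simp only [link, Set.mem_ofPred_eq, Finset.disjoint_singleton_right, Finset.union_singleton]

theorem reach_of_pair_mem {u v : Fin n} (h : {u, v} ∈ Δ.faces) : Δ.Reach u v := by
  by_cases huv : u = v
  · exact huv ▸ Relation.ReflTransGen.refl
  · exact Relation.ReflTransGen.single ⟨huv, h⟩

theorem exists_card_eq_three_of_two_le_dim (hdim : 2 ≤ Δ.dim) :
    ∃ W ∈ Δ.faces, W.card = 3 := by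
  have hbdd : BddAbove (Finset.card '' Δ.faces) :=
    ⟨n, by rintro _ ⟨F, -, rfl⟩; simpa using F.card_le_univ⟩
  have hne : (Finset.card '' Δ.faces).Nonempty := by
    by_contra h
    rw [Set.not_nonempty_iff_eq_empty] at h
    simp [dim, h] at hdim
  obtain ⟨F, hF, hFc⟩ := Nat.sSup_mem hne hbdd
  have h3 : 3 ≤ F.card := by simp only [dim, Int.ofNat_eq_natCast, ← hFc] at hdim; omega
  obtain ⟨W, hWF, hW3⟩ := Finset.exists_subset_card_eq h3
  exact ⟨W, Δ.down_closed hF hWF, hW3⟩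

theorem exists_insert_mem_of_subset_union {F G G' : Finset (Fin n)} (hG' : G' ∈ Δ.faces)
    (hGG' : G ⊆ G') (hG'F : G' ⊆ G ∪ F) (hcard : G.card < G'.card) :
    ∃ i ∈ F, i ∉ G ∧ insert i G ∈ Δ.faces := by
  obtain ⟨i, hiG', hiG⟩ := Finset.exists_of_ssubset (Finset.ssubset_iff_subset_ne.2
    ⟨hGG', by rintro rfl; exact hcard.false⟩)
  exact ⟨i, (Finset.mem_union.1 (hG'F hiG')).resolve_left hiG, hiG,
    Δ.down_closed hG' (Finset.insert_subset hiG' hGG')⟩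

namespace IsMatroid

theorem link (hM : Δ.IsMatroid) (G : Finset (Fin n)) : (Δ.link G).IsMatroid := by
  rintro F H ⟨hFG, hF⟩ ⟨hHG, hH⟩ hcard
  obtain ⟨i, hi, hiH, hins⟩ := hM _ _ hF hH (by
    rw [Finset.card_union_of_disjoint hFG, Finset.card_union_of_disjoint hHG]; omega)
  have hiG : i ∉ G := fun h => hiH (Finset.mem_union_right _ h)
  refine ⟨i, (Finset.mem_union.1 hi).resolve_right hiG, fun h => hiH (Finset.mem_union_left _ h),
    Finset.disjoint_insert_left.2 ⟨hiG, hHG⟩, ?_⟩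
  rwa [Finset.insert_union]

theorem exists_augment (hM : Δ.IsMatroid) {S T : Finset (Fin n)} (hS : S ∈ Δ.faces)
    (hT : T ∈ Δ.faces) (hcard : T.card ≤ S.card) :
    ∃ T' ∈ Δ.faces, T ⊆ T' ∧ T' ⊆ T ∪ S ∧ T'.card = S.card := by
  induction hk : S.card - T.card generalizing T with
  | zero => exact ⟨T, hT, subset_rfl, Finset.subset_union_left, by omega⟩
  | succ k ih =>
    obtain ⟨i, hiS, hiT, hins⟩ := hM S T hS hT (by omega)
    have hcard' := Finset.card_insert_of_notMem hiT
    obtain ⟨T', hT', hTT', hT'S, hT'card⟩ := ih hins (by omega) (by omega)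
    refine ⟨T', hT', (Finset.subset_insert i T).trans hTT', hT'S.trans ?_, hT'card⟩
    rw [Finset.insert_union]
    exact Finset.insert_subset (Finset.mem_union_right _ hiS) subset_rfl

theorem pair_mem_of_pair_notMem (hM : Δ.IsMatroid) {a c p : Fin n} (ha : {a} ∈ Δ.faces)
    (hpc : {p, c} ∈ Δ.faces) (hpc' : p ≠ c) (hac : {a, c} ∉ Δ.faces) : {a, p} ∈ Δ.faces := by
  obtain ⟨i, hi, hia, hins⟩ := hM _ _ hpc ha (by simp [Finset.card_pair hpc'])
  rcases Finset.mem_insert.1 hi with rfl | hi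
  · rwa [Finset.pair_comm]
  · rw [Finset.mem_singleton.1 hi, Finset.pair_comm] at hins
    exact absurd hins hac

theorem exists_pair_mem_pair_mem (hM : Δ.IsMatroid) {W : Finset (Fin n)} (hW : W ∈ Δ.faces)
    (hW2 : 1 < W.card) {u t : Fin n} (hu : {u} ∈ Δ.faces) (ht : {t} ∈ Δ.faces) :
    ∃ k, {u, k} ∈ Δ.faces ∧ {k, t} ∈ Δ.faces := by
  obtain ⟨k, -, hku, hk⟩ := hM _ _ hW hu (by simpa using hW2)
  obtain ⟨i, hi, -, hi'⟩ := hM _ _ hk ht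
    (by simp [Finset.card_pair (Finset.notMem_singleton.1 hku)])
  rcases Finset.mem_insert.1 hi with rfl | hi
  · exact ⟨i, by rwa [Finset.pair_comm], hi'⟩
  · rw [Finset.mem_singleton.1 hi] at hi'
    exact ⟨t, hi', by simpa using ht⟩

theorem connected (hM : Δ.IsMatroid) (hdim : 2 ≤ Δ.dim) : Δ.Connected := by
  obtain ⟨W, hW, hW3⟩ := exists_card_eq_three_of_two_le_dim hdim
  intro u hu v hv
  obtain ⟨k, huk, hkv⟩ := hM.exists_pair_mem_pair_mem hW (by omega) hu hv
  exact (reach_of_pair_mem huk).trans (reach_of_pair_mem hkv)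

theorem locallyMatroid (hM : Δ.IsMatroid) : Δ.LocallyMatroid := fun v _ => hM.link {v}

end IsMatroid

namespace LocallyMatroid

theorem exists_augment (hloc : Δ.LocallyMatroid) {S T : Finset (Fin n)} {v : Fin n}
    (hS : S ∈ Δ.faces) (hT : T ∈ Δ.faces) (hvS : v ∈ S) (hvT : v ∈ T)
    (hcard : T.card ≤ S.card) :
    ∃ T' ∈ Δ.faces, T ⊆ T' ∧ T' ⊆ T ∪ S ∧ T'.card = S.card := by
  have hlink {F : Finset (Fin n)} (hF : F ∈ Δ.faces) (hvF : v ∈ F) :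
      F.erase v ∈ (Δ.link {v}).faces :=
    mem_link_singleton_iff.2 ⟨F.notMem_erase v, by rwa [Finset.insert_erase hvF]⟩
  obtain ⟨T', hT', hTT', hT'S, hT'card⟩ :=
    (hloc v (Δ.down_closed hS (Finset.singleton_subset_iff.2 hvS))).exists_augment
      (hlink hS hvS) (hlink hT hvT)
      (by rw [Finset.card_erase_of_mem hvS, Finset.card_erase_of_mem hvT]; omega)
  obtain ⟨hvT', hins⟩ := mem_link_singleton_iff.1 hT'
  refine ⟨insert v T', hins, ?_, Finset.insert_subset (Finset.mem_union_left _ hvT) ?_, ?_⟩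
  · rw [← Finset.insert_erase hvT]
    exact Finset.insert_subset_insert v hTT'
  · exact hT'S.trans (Finset.union_subset_union (T.erase_subset v) (S.erase_subset v))
  · rw [Finset.card_insert_of_notMem hvT', hT'card, Finset.card_erase_add_one hvS]

theorem exists_card_eq_three (hloc : Δ.LocallyMatroid) (hconn : Δ.Connected)
    (hdim : 2 ≤ Δ.dim) {v : Fin n} (hv : v ∈ Δ.vertexSet) :
    ∃ H ∈ Δ.faces, v ∈ H ∧ H.card = 3 := by
  obtain ⟨W, hW, hW3⟩ := exists_card_eq_three_of_two_le_dim hdim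
  obtain ⟨w, hw⟩ : W.Nonempty := Finset.card_pos.1 (by omega)
  have hwv := hconn w (Δ.down_closed hW (Finset.singleton_subset_iff.2 hw)) v hv
  clear hv
  induction hwv with
  | refl => exact ⟨W, hW, hw, hW3⟩
  | @tail b c _ hbc ih =>
    obtain ⟨H, hH, hbH, hH3⟩ := ih
    obtain ⟨H', hH', hbcH', -, hH'3⟩ := hloc.exists_augment hH hbc.2 hbH
      (Finset.mem_insert_self b {c}) (by rw [Finset.card_pair hbc.1, hH3]; omega)
    exact ⟨H', hH', hbcH' (by simp), hH'3.trans hH3⟩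

theorem pair_mem_of_mem_link (hloc : Δ.LocallyMatroid) {a c p z : Fin n}
    (hac : {a, c} ∉ Δ.faces) (hpz : {p, z} ∈ (Δ.link {c}).faces) (haz : {a, z} ∈ Δ.faces) :
    {a, p} ∈ Δ.faces := by
  by_cases hpz' : p = z
  · exact hpz' ▸ haz
  obtain ⟨hc, hins⟩ := mem_link_singleton_iff.1 hpz
  have hcp : c ≠ p := fun h => hc (h ▸ Finset.mem_insert_self p {z})
  have hcz : c ≠ z := fun h => hc (h ▸ by simp)
  have haz' : a ≠ z := by
    rintro rfl
    exact hac (Δ.down_closed hins (by simp [Finset.insert_subset_iff]))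
  have hlink_a : {a} ∈ (Δ.link {z}).faces :=
    mem_link_singleton_iff.2 ⟨by simpa using haz'.symm, by rwa [Finset.pair_comm]⟩
  have hlink_pc : {p, c} ∈ (Δ.link {z}).faces :=
    mem_link_singleton_iff.2 ⟨by simp [Ne.symm hpz', hcz.symm],
      Δ.down_closed hins (by simp [Finset.insert_subset_iff])⟩
  have hlink_ac : {a, c} ∉ (Δ.link {z}).faces := fun h =>
    hac (Δ.down_closed (mem_link_singleton_iff.1 h).2 (Finset.subset_insert _ _))
  have hap := (hloc z (Δ.down_closed haz (by simp))).pair_mem_of_pair_notMem hlink_a hlink_pc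
    hcp.symm hlink_ac
  exact Δ.down_closed (mem_link_singleton_iff.1 hap).2 (Finset.subset_insert _ _)

theorem pair_mem_of_pair_notMem (hloc : Δ.LocallyMatroid) (hconn : Δ.Connected)
    (hdim : 2 ≤ Δ.dim) {a b c t : Fin n} (hac : {a, c} ∉ Δ.faces) (hat : {a, t} ∈ Δ.faces)
    (htc : {t, c} ∈ Δ.faces) (hbc : {b, c} ∈ Δ.faces) (hbc' : b ≠ c) : {a, b} ∈ Δ.faces := by
  have htc' : t ≠ c := by rintro rfl; exact hac hat
  have hc : c ∈ Δ.vertexSet := Δ.down_closed hbc (by simp)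
  obtain ⟨H, hH, hcH, hH3⟩ := hloc.exists_card_eq_three hconn hdim hc
  have hlink {x : Fin n} (hxc : {x, c} ∈ Δ.faces) (hx : x ≠ c) : {x} ∈ (Δ.link {c}).faces :=
    mem_link_singleton_iff.2 ⟨by simpa using hx.symm, by rwa [Finset.pair_comm]⟩
  obtain ⟨k, hbk, hkt⟩ := (hloc c hc).exists_pair_mem_pair_mem (W := H.erase c)
    (mem_link_singleton_iff.2 ⟨H.notMem_erase c, by rwa [Finset.insert_erase hcH]⟩)
    (by rw [Finset.card_erase_of_mem hcH, hH3]; omega) (hlink hbc hbc') (hlink htc htc')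
  exact hloc.pair_mem_of_mem_link hac hbk (hloc.pair_mem_of_mem_link hac hkt hat)

theorem exists_pair_mem_pair_mem_of_reach (hloc : Δ.LocallyMatroid) (hconn : Δ.Connected)
    (hdim : 2 ≤ Δ.dim) {a c : Fin n} (ha : a ∈ Δ.vertexSet) (h : Δ.Reach a c) :
    ∃ t, {a, t} ∈ Δ.faces ∧ {t, c} ∈ Δ.faces := by
  induction h with
  | refl =>
    have ha : {a} ∈ Δ.faces := ha
    exact ⟨a, by simpa using ha, by simpa using ha⟩
  | @tail b d _ hbd ih =>
    obtain ⟨t, hat, htb⟩ := ih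
    by_cases hab : {a, b} ∈ Δ.faces
    · exact ⟨b, hab, hbd.2⟩
    · refine ⟨d, hloc.pair_mem_of_pair_notMem hconn hdim hab hat htb ?_ hbd.1.symm, ?_⟩
      · rw [Finset.pair_comm]; exact hbd.2
      · simpa using Δ.down_closed hbd.2 (by simp)

theorem exists_mem_pair_mem (hloc : Δ.LocallyMatroid) (hconn : Δ.Connected)
    (hdim : 2 ≤ Δ.dim) {v : Fin n} {F : Finset (Fin n)} (hv : v ∈ Δ.vertexSet)
    (hF : F ∈ Δ.faces) (hF2 : 1 < F.card) : ∃ u ∈ F, {v, u} ∈ Δ.faces := by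
  obtain ⟨b, hb, c, hc, hbc⟩ := Finset.one_lt_card.1 hF2
  by_cases hvc : {v, c} ∈ Δ.faces
  · exact ⟨c, hc, hvc⟩
  have hc' : c ∈ Δ.vertexSet := Δ.down_closed hF (Finset.singleton_subset_iff.2 hc)
  obtain ⟨t, hvt, htc⟩ :=
    hloc.exists_pair_mem_pair_mem_of_reach hconn hdim hv (hconn v hv c hc')
  exact ⟨b, hb, hloc.pair_mem_of_pair_notMem hconn hdim hvc hvt htc
    (Δ.down_closed hF (Finset.insert_subset hb (Finset.singleton_subset_iff.2 hc))) hbc⟩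

theorem exists_mem_subset_insert (hloc : Δ.LocallyMatroid) (hconn : Δ.Connected)
    (hdim : 2 ≤ Δ.dim) {v : Fin n} {F : Finset (Fin n)} (hv : v ∈ Δ.vertexSet)
    (hF : F ∈ Δ.faces) (hFne : F.Nonempty) :
    ∃ H ∈ Δ.faces, v ∈ H ∧ H ⊆ insert v F ∧ H.card = F.card := by
  rcases Nat.lt_or_ge 1 F.card with hF2 | hF1
  · obtain ⟨u, huF, hvu⟩ := hloc.exists_mem_pair_mem hconn hdim hv hF hF2
    obtain ⟨H, hH, hvuH, hHF, hHcard⟩ := hloc.exists_augment hF hvu huF (by simp)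
      ((Finset.card_le_two).trans hF2)
    refine ⟨H, hH, hvuH (Finset.mem_insert_self v {u}), hHF.trans ?_, hHcard⟩
    rw [Finset.insert_union, Finset.singleton_union, Finset.insert_eq_of_mem huF]
  · exact ⟨{v}, hv, Finset.mem_singleton_self v, by simp,
      by rw [Finset.card_singleton]; have := hFne.card_pos; omega⟩

theorem isMatroid (hloc : Δ.LocallyMatroid) (hconn : Δ.Connected) (hdim : 2 ≤ Δ.dim) :
    Δ.IsMatroid := by
  intro F G hF hG hcard
  rcases G.eq_empty_or_nonempty with rfl | ⟨v, hvG⟩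
  · obtain ⟨i, hi⟩ := Finset.card_pos.1 (by simpa using hcard)
    exact ⟨i, hi, Finset.notMem_empty i, Δ.down_closed hF (by simpa using hi)⟩
  have hv : v ∈ Δ.vertexSet := Δ.down_closed hG (Finset.singleton_subset_iff.2 hvG)
  obtain ⟨H, hH, hvH, hHF, hHcard⟩ :=
    hloc.exists_mem_subset_insert hconn hdim hv hF (Finset.card_pos.1 (by omega))
  obtain ⟨G', hG', hGG', hG'H, hG'card⟩ := hloc.exists_augment hH hG hvH hvG (by omega)
  refine exists_insert_mem_of_subset_union hG' hGG' (hG'H.trans ?_) (by omega)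
  exact Finset.union_subset Finset.subset_union_left
    (hHF.trans (Finset.insert_subset (Finset.mem_union_left _ hvG) Finset.subset_union_right))

end LocallyMatroid

end SimComplex

/-- **Theorem.** A simplicial complex of dimension at least 2 is a matroid if and only
if it is connected and locally a matroid. -/
theorem matroid_iff_connected_and_locally_matroid {n : ℕ} (Δ : SimComplex n)
    (hdim : 2 ≤ Δ.dim) :
    Δ.IsMatroid ↔ (Δ.Connected ∧ Δ.LocallyMatroid) :=
  ⟨fun hM => ⟨hM.connected hdim, hM.locallyMatroid⟩,
    fun ⟨hconn, hloc⟩ => hloc.isMatroid hconn hdim⟩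
end

section
/- Let Δ be a matroid and let F and G be two maximal proper subsets of a minimal nonface of Δ. Then link_Δ F = link_Δ G. -/
open CategoryTheory Opposite

/-!
Let `F` and `G` be facets of the boundary of the minimal nonface `H`, and let `K` lie in the
link of `F`. Then `K` misses `H`, since otherwise `K ∪ F ⊇ H`. Augmenting the face `G` from the
face `K ∪ F` gives a face `C` with `G ⊆ C ⊆ K ∪ H` and `|C| = |K| + |G|`. As `C` is a face it
cannot contain the single vertex of `H ∖ G`, so `C ⊆ K ∪ G`, and counting forces `C = K ∪ G`.
-/

theorem Finset.insert_eq_of_card_add_one_eq {α : Type*} [DecidableEq α] {s t : Finset α} {a : α}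
    (hst : s ⊆ t) (hcard : s.card + 1 = t.card) (ha : a ∈ t) (has : a ∉ s) : insert a s = t :=
  Finset.eq_of_subset_of_card_le (Finset.insert_subset ha hst)
    (by rw [Finset.card_insert_of_notMem has]; omega)

namespace SimComplex

open Finset

variable {n : ℕ} {Δ : SimComplex n}

theorem IsMatroid.exists_face_subset_union_card_eq (hM : Δ.IsMatroid) {A B : Finset (Fin n)}
    (hA : A ∈ Δ.faces) (hB : B ∈ Δ.faces) (hBA : B.card ≤ A.card) :
    ∃ C ∈ Δ.faces, B ⊆ C ∧ C ⊆ A ∪ B ∧ C.card = A.card := by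
  induction hk : A.card - B.card generalizing B with
  | zero => exact ⟨B, hB, subset_rfl, subset_union_right, by omega⟩
  | succ k ih =>
    obtain ⟨i, hiA, hiB, hiB_face⟩ := hM A B hA hB (by omega)
    have hcard : (insert i B).card = B.card + 1 := card_insert_of_notMem hiB
    obtain ⟨C, hC, hBC, hCA, hCcard⟩ := ih hiB_face (by omega) (by omega)
    refine ⟨C, hC, (subset_insert i B).trans hBC, hCA.trans ?_, hCcard⟩
    rw [union_insert, insert_eq_of_mem (mem_union_left B hiA)]

theorem disjoint_of_mem_link_of_notMem_faces {H F K : Finset (Fin n)} (hH : H ∉ Δ.faces)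
    (hFH : F ⊆ H) (hFcard : F.card + 1 = H.card) (hK : K ∈ (Δ.link F).faces) :
    Disjoint K H := by
  rw [disjoint_left]
  intro x hxK hxH
  have hxF : x ∉ F := disjoint_left.mp hK.1 hxK
  refine hH (Δ.down_closed hK.2 ?_)
  rw [← insert_eq_of_card_add_one_eq hFH hFcard hxH hxF]
  exact insert_subset (mem_union_left F hxK) subset_union_right

theorem link_faces_subset_of_notMem_faces (hM : Δ.IsMatroid) {H F G : Finset (Fin n)}
    (hH : H ∉ Δ.faces) (hG : G ∈ Δ.faces) (hFH : F ⊆ H) (hFcard : F.card + 1 = H.card)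
    (hGH : G ⊆ H) (hGcard : G.card + 1 = H.card) :
    (Δ.link F).faces ⊆ (Δ.link G).faces := by
  intro K hK
  have hKG : Disjoint K G := (disjoint_of_mem_link_of_notMem_faces hH hFH hFcard hK).mono_right hGH
  obtain ⟨C, hC, hGC, hCKF, hCcard⟩ :=
    hM.exists_face_subset_union_card_eq hK.2 hG (by rw [card_union_of_disjoint hK.1]; omega)
  have hCKG : C ⊆ K ∪ G := by
    intro x hxC
    by_contra hx
    obtain ⟨hxK, hxG⟩ := not_or.mp (mem_union.not.mp hx)
    have hxF : x ∈ F := by simpa [hxK, hxG] using hCKF hxC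
    refine hH (Δ.down_closed hC ?_)
    rw [← insert_eq_of_card_add_one_eq hGH hGcard (hFH hxF) hxG]
    exact insert_subset hxC hGC
  have hC_eq : C = K ∪ G := eq_of_subset_of_card_le hCKG <| by
    rw [hCcard, card_union_of_disjoint hK.1, card_union_of_disjoint hKG]
    omega
  exact ⟨hKG, hC_eq ▸ hC⟩

end SimComplex

/-- **Lemma.** In a matroid, any two maximal proper subsets of a minimal nonface have
the same link. -/
theorem link_eq_of_maximal_subsets_of_minimal_nonface {n : ℕ} (Δ : SimComplex n)
    (hM : Δ.IsMatroid) (H F G : Finset (Fin n))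
    (hH : H ∉ Δ.faces) (hHmin : ∀ F' ⊂ H, F' ∈ Δ.faces)
    (hF : F ⊂ H) (hFcard : F.card + 1 = H.card)
    (hG : G ⊂ H) (hGcard : G.card + 1 = H.card) :
    (Δ.link F).faces = (Δ.link G).faces :=
  Set.Subset.antisymm
    (SimComplex.link_faces_subset_of_notMem_faces hM hH (hHmin G hG) hF.subset hFcard
      hG.subset hGcard)
    (SimComplex.link_faces_subset_of_notMem_faces hM hH (hHmin F hF) hG.subset hGcard
      hF.subset hFcard)
end
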